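/- If the set {M ∈ E(M) : h_S(M) < ∞} is nonempty, then {M ∈ E(M) : h_S(M) < ∞} = E(u), i.e. the equilibrium states of M with finite conditional entropy are exactly the thermodynamic equilibrium states of the energy function u. -/

import Mathlib

open MeasureTheory Filter Topology
open scoped ENNReal NNReal Classical

noncomputable section

/-- A countable Markov system `(K_{i(e)}, w_e, p_e)_{e ∈ E}` on a metric space `K`:
a partition `(K_j)_{j ∈ N}` of `K` into nonempty Borel sets, source and target maps
`i, t : E → N` (`i` surjective), and for each `e ∈ E` Borel maps `w_e` and probability
functions `p_e` (extended by zero outside `K_{i(e)}`) with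
`∑_{e, i(e)=j} p_e(y) = 1` for `y ∈ K_j`. -/
structure MarkovSystem (K : Type*) [MetricSpace K] [MeasurableSpace K]
    (N : Type*) (E : Type*) where
  Kset : N → Set K
  Kset_nonempty : ∀ j, (Kset j).Nonempty
  Kset_measurable : ∀ j, MeasurableSet (Kset j)
  Kset_disjoint : Pairwise (Function.onFun Disjoint Kset)
  Kset_cover : (⋃ j, Kset j) = Set.univ
  i : E → N
  t : E → N
  i_surj : Function.Surjective i
  w : E → K → K
  p : E → K → ℝ
  w_measurable : ∀ e, Measurable (w e)
  p_measurable : ∀ e, Measurable (p e)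
  p_nonneg : ∀ e x, 0 ≤ p e x
  p_le_one : ∀ e x, p e x ≤ 1
  p_zero_outside : ∀ e x, x ∉ Kset (i e) → p e x = 0
  w_mapsTo : ∀ e, Set.MapsTo (w e) (Kset (i e)) (Kset (t e))
  p_pos_somewhere : ∀ e, ∃ x ∈ Kset (i e), 0 < p e x
  p_tsum_one : ∀ j, ∀ x ∈ Kset j, (∑' e : {e : E // i e = j}, p e.val x) = 1

/-- `Ē = E ∪ {∞}` (one-point compactification); with `E` countable its Borel σ-algebra
consists of all subsets. -/
instance optionMeasurableSpace (E : Type*) : MeasurableSpace (Option E) := ⊤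

/-- The code space `Σ̄ = Ē^ℤ`, carrying the product σ-algebra. -/
abbrev CodeSpace (E : Type*) : Type _ := ℤ → Option E

/-- The left shift `S` on the code space, `(Sσ)_{k-1} = σ_k`. -/
def shiftMap (E : Type*) : CodeSpace E → CodeSpace E := fun σ k => σ (k + 1)

/-- The cylinder set `_m[es₀, …, es_{n}] = {σ : σ_{m+k} = es_k}`. -/
def cylSetL {E : Type*} (m : ℤ) (es : List (Option E)) : Set (CodeSpace E) :=
  {σ | ∀ (k : ℕ) (h : k < es.length), σ (m + (k : ℤ)) = es.get ⟨k, h⟩}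

/-- The σ-algebra `𝓕` generated by the cylinder sets `_m[e_m, …, e_0]`, `m ≤ 0`. -/
def pastAlgebra (E : Type*) : MeasurableSpace (CodeSpace E) :=
  MeasurableSpace.generateFrom
    {A | ∃ es : List (Option E), es ≠ [] ∧ A = cylSetL (1 - (es.length : ℤ)) es}

/-- The conditional entropy `h_S(Λ) = H_Λ((_1[e])_{e ∈ Ē} | 𝓕)`. -/
def entropyS {E : Type*} (Λ : Measure (CodeSpace E)) : ℝ≥0∞ :=
  ∑' eo : Option E,
    ∫⁻ σ, ENNReal.ofReal
        (Real.negMulLog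
          ((Λ[Set.indicator {τ : CodeSpace E | τ 1 = eo} (fun _ => (1 : ℝ)) | pastAlgebra E]) σ)) ∂Λ

namespace MarkovSystem

variable {K : Type*} [MetricSpace K] [MeasurableSpace K] {N E : Type*}

/-- The Markov operator `Uf = ∑_e p_e · (f ∘ w_e)` acting on nonnegative Borel functions. -/
def markovOp (M : MarkovSystem K N E) (f : K → ℝ≥0∞) : K → ℝ≥0∞ :=
  fun x => ∑' e : E, ENNReal.ofReal (M.p e x) * f (M.w e x)

/-- The adjoint operator `U*` acting on measures, `(U*ν)(B) = ∫ U(1_B) dν`. -/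
def adjOp (M : MarkovSystem K N E) (ν : Measure K) : Measure K :=
  Measure.sum fun e : E =>
    Measure.map (M.w e) (ν.withDensity fun x => ENNReal.ofReal (M.p e x))

/-- `μ ∈ P(M)`: `μ` is an invariant Borel probability measure, `U*μ = μ`. -/
def IsInvariantMeasure (M : MarkovSystem K N E) (μ : Measure K) : Prop :=
  IsProbabilityMeasure μ ∧ M.adjOp μ = μ

/-- The path space `Σ_G`: all coordinates lie in `E` and `i(σ_{n+1}) = t(σ_n)`. -/
def pathSpace (M : MarkovSystem K N E) : Set (CodeSpace E) :=
  {σ | ∀ n : ℤ, ∃ e e' : E, σ n = some e ∧ σ (n + 1) = some e' ∧ M.i e' = M.t e}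

/-- `T_j = {σ ∈ Σ_G : t(σ_0) = j}`. -/
def Tset (M : MarkovSystem K N E) (j : N) : Set (CodeSpace E) :=
  {σ | σ ∈ M.pathSpace ∧ ∃ e : E, σ 0 = some e ∧ M.t e = j}

/-- `w` extended to `Ē`, with `w_∞ = id`. -/
def wext (M : MarkovSystem K N E) : Option E → K → K := fun o => o.elim id M.w

/-- `p` extended to `Ē`, with `p_∞ = 0`. -/
def pext (M : MarkovSystem K N E) : Option E → K → ℝ := fun o => o.elim (fun _ => 0) M.p

/-- `i` extended to `Ē`, with `i(∞) = j₀`. -/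
def iext (M : MarkovSystem K N E) (j0 : N) : Option E → N := fun o => o.elim j0 M.i

/-- `t` extended to `Ē`, with `t(∞) = j₀`. -/
def text (M : MarkovSystem K N E) (j0 : N) : Option E → N := fun o => o.elim j0 M.t

/-- `iterW M σ n y = w_{σ_0} ∘ w_{σ_{-1}} ∘ ⋯ ∘ w_{σ_{-n}} (y)`. -/
def iterW (M : MarkovSystem K N E) (σ : CodeSpace E) : ℕ → K → K
  | 0, y => M.wext (σ 0) y
  | n + 1, y => M.iterW σ n (M.wext (σ (-(n + 1 : ℤ))) y)

/-- `orbit M j0 xp σ n = w_{σ_0} ∘ ⋯ ∘ w_{σ_{-n}} (x_{i(σ_{-n})})`. -/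
def orbit (M : MarkovSystem K N E) (j0 : N) (xp : N → K) (σ : CodeSpace E) (n : ℕ) : K :=
  M.iterW σ n (xp (M.iext j0 (σ (-(n : ℤ)))))

/-- `D`: the set of `σ ∈ Σ_G` for which `lim_{m → -∞} w_{σ_0} ∘ ⋯ ∘ w_{σ_m}(x_{i(σ_m)})` exists. -/
def codeDomain (M : MarkovSystem K N E) (j0 : N) (xp : N → K) : Set (CodeSpace E) :=
  {σ | σ ∈ M.pathSpace ∧ ∃ l : K, Tendsto (fun n : ℕ => M.orbit j0 xp σ n) atTop (𝓝 l)}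

/-- The coding map `F`: the above limit on `D`, and `x_{t(σ_0)}` elsewhere. -/
def code (M : MarkovSystem K N E) (j0 : N) (xp : N → K) (σ : CodeSpace E) : K :=
  if h : σ ∈ M.codeDomain j0 xp then h.2.choose else xp (M.text j0 (σ 0))

/-- `Λ ∈ E(M)`: `Λ` is a shift-invariant Borel probability measure with `Λ(D) = 1` and
`E_Λ(1_{_1[e]} | 𝓕) = p_e ∘ F` `Λ`-a.e. for every `e ∈ E` (an equilibrium state). -/
def IsEquilibrium (M : MarkovSystem K N E) (j0 : N) (xp : N → K)
    (Λ : Measure (CodeSpace E)) : Prop :=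
  IsProbabilityMeasure Λ ∧ Measure.map (shiftMap E) Λ = Λ ∧
    Λ (M.codeDomain j0 xp) = 1 ∧
    ∀ e : E,
      (Λ[Set.indicator {σ : CodeSpace E | σ 1 = some e} (fun _ => (1 : ℝ)) | pastAlgebra E])
        =ᵐ[Λ] fun σ => M.p e (M.code j0 xp σ)

/-- `pbar` is the family of continuous extensions `p̄_e` of `p_e|_{K_{i(e)}}` to the closure
of `K_{i(e)}`, extended further by zero on `K`. -/
def IsUCExtensionP (M : MarkovSystem K N E) (pbar : E → K → ℝ) : Prop :=
  ∀ e : E, ContinuousOn (pbar e) (closure (M.Kset (M.i e))) ∧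
    (∀ x ∈ M.Kset (M.i e), pbar e x = M.p e x) ∧
    (∀ x, x ∉ closure (M.Kset (M.i e)) → pbar e x = 0)

/-- `wb` is a family of continuous extensions `w̄_e` of `w_e|_{K_{i(e)}}` to the closure
of `K_{i(e)}`. -/
def IsUCExtensionW (M : MarkovSystem K N E) (wb : E → K → K) : Prop :=
  ∀ e : E, ContinuousOn (wb e) (closure (M.Kset (M.i e))) ∧
    (∀ x ∈ M.Kset (M.i e), wb e x = M.w e x)

/-- The Markov system is uniformly continuous: each `w_e|_{K_{i(e)}}` and `p_e|_{K_{i(e)}}`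
is uniformly continuous. -/
def IsUniformlyContinuous (M : MarkovSystem K N E) : Prop :=
  ∀ e : E, UniformContinuousOn (M.w e) (M.Kset (M.i e)) ∧
    UniformContinuousOn (M.p e) (M.Kset (M.i e))

/-- `∂p_e = p̄_e · 1_{cl(K_{i(e)}) \ K_{i(e)}}`. -/
def dp (M : MarkovSystem K N E) (pbar : E → K → ℝ) (e : E) : K → ℝ :=
  Set.indicator (closure (M.Kset (M.i e)) \ M.Kset (M.i e)) (pbar e)

/-- `Λ ∈ Ẽ(M)` (asymptotic state): shift-invariant probability with `Λ(D) = 1` and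
`E_Λ(1_{_1[e]} | 𝓕) = (p̄_e ∘ F)·1_{T_{i(e)}}` `Λ`-a.e. for every `e`. -/
def IsAsymptotic (M : MarkovSystem K N E) (j0 : N) (xp : N → K) (pbar : E → K → ℝ)
    (Λ : Measure (CodeSpace E)) : Prop :=
  IsProbabilityMeasure Λ ∧ Measure.map (shiftMap E) Λ = Λ ∧
    Λ (M.codeDomain j0 xp) = 1 ∧
    ∀ e : E,
      (Λ[Set.indicator {σ : CodeSpace E | σ 1 = some e} (fun _ => (1 : ℝ)) | pastAlgebra E])
        =ᵐ[Λ] Set.indicator (M.Tset (M.i e)) (fun σ => pbar e (M.code j0 xp σ))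

/-- `Λ ∈ E_⊥(M)`: shift-invariant probability with `Λ(D) = 1` and
`E_Λ(1_{_1[e]} | 𝓕) = (∂p_e ∘ F)·1_{T_{i(e)}}` `Λ`-a.e. for every `e`. -/
def IsPerp (M : MarkovSystem K N E) (j0 : N) (xp : N → K) (pbar : E → K → ℝ)
    (Λ : Measure (CodeSpace E)) : Prop :=
  IsProbabilityMeasure Λ ∧ Measure.map (shiftMap E) Λ = Λ ∧
    Λ (M.codeDomain j0 xp) = 1 ∧
    ∀ e : E,
      (Λ[Set.indicator {σ : CodeSpace E | σ 1 = some e} (fun _ => (1 : ℝ)) | pastAlgebra E])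
        =ᵐ[Λ] Set.indicator (M.Tset (M.i e)) (fun σ => M.dp pbar e (M.code j0 xp σ))

/-- `G = ⋃_{k ≥ 0} ⋃_{j ∈ N} S^{-k}(F^{-1}(K_j) ∩ T_j)`. -/
def Gset (M : MarkovSystem K N E) (j0 : N) (xp : N → K) : Set (CodeSpace E) :=
  ⋃ (k : ℕ) (j : N), (shiftMap E)^[k] ⁻¹' ((M.code j0 xp) ⁻¹' (M.Kset j) ∩ M.Tset j)

/-- `M` is non-degenerate: for every asymptotic state `Λ` there is `i ∈ N` with
`Λ(T_i ∩ F^{-1}(K_i)) > 0`. -/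
def IsNonDegenerate (M : MarkovSystem K N E) (j0 : N) (xp : N → K) (pbar : E → K → ℝ) : Prop :=
  ∀ Λ : Measure (CodeSpace E), M.IsAsymptotic j0 xp pbar Λ →
    ∃ i : N, 0 < Λ (M.Tset i ∩ (M.code j0 xp) ⁻¹' (M.Kset i))

/-- `M` is consistent: `F(Λ) ∈ P(M)` for every asymptotic state `Λ`. -/
def IsConsistent (M : MarkovSystem K N E) (j0 : N) (xp : N → K) (pbar : E → K → ℝ) : Prop :=
  ∀ Λ : Measure (CodeSpace E), M.IsAsymptotic j0 xp pbar Λ →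
    M.IsInvariantMeasure (Measure.map (M.code j0 xp) Λ)

/-- `Rf = ∑_e ∂p_e · (f ∘ w̄_e)`. -/
def Rop (M : MarkovSystem K N E) (pbar : E → K → ℝ) (wb : E → K → K)
    (f : K → ℝ≥0∞) : K → ℝ≥0∞ :=
  fun x => ∑' e : E, ENNReal.ofReal (M.dp pbar e x) * f (wb e x)

/-- `Ω = ⋂_{n ≥ 1} {R^n 1 ≥ 1}`. -/
def OmegaSet (M : MarkovSystem K N E) (pbar : E → K → ℝ) (wb : E → K → K) : Set K :=
  ⋂ n : ℕ, {x : K | 1 ≤ (M.Rop pbar wb)^[n + 1] (fun _ => 1) x}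

/-- `ξ_j = ∑_{e, i(e) = j} sup_{x ∈ K_j} p_e(x)`. -/
def xi (M : MarkovSystem K N E) (j : N) : ℝ≥0∞ :=
  ∑' e : {e : E // M.i e = j}, ⨆ x ∈ M.Kset j, ENNReal.ofReal (M.p e.val x)

/-- `M` has a dominating Markov chain: `ξ_j < ∞` for all `j ∈ N`. -/
def HasDominatingChain (M : MarkovSystem K N E) : Prop := ∀ j : N, M.xi j ≠ ⊤

/-- `ξ_j · q_{j j'} = ∑_{e, i(e) = j, t(e) = j'} sup_{x ∈ K_j} p_e(x)`. -/
def xiq (M : MarkovSystem K N E) (j j' : N) : ℝ≥0∞ :=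
  ∑' e : {e : E // M.i e = j ∧ M.t e = j'}, ⨆ x ∈ M.Kset j, ENNReal.ofReal (M.p e.val x)

/-- `c = ∑_{j'} sup_j ξ_j q_{j j'}`. -/
def cConst (M : MarkovSystem K N E) : ℝ≥0∞ := ∑' j' : N, ⨆ j : N, M.xiq j j'

/-- `α^{x_0}_n({j}) = (1/n) ∑_{k=1}^n ((U*)^k δ_{x_0})(K_j)`. -/
def alphaMeas (M : MarkovSystem K N E) (x0 : K) (n : ℕ) (j : N) : ℝ≥0∞ :=
  (n : ℝ≥0∞)⁻¹ * ∑ k ∈ Finset.range n, (M.adjOp^[k + 1] (Measure.dirac x0)) (M.Kset j)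

/-- Condition (T) at `x_0`: the sequence `(α^{x_0}_n)_n` is uniformly tight. -/
def ConditionT (M : MarkovSystem K N E) (x0 : K) : Prop :=
  ∀ ε : ℝ, 0 < ε → ∃ V : Finset N,
    ∀ n : ℕ, (∑' j : {j : N // j ∉ V}, M.alphaMeas x0 (n + 1) j.val) < ENNReal.ofReal ε

/-- `M` is contractive with contraction rate `a`:
`∑_{e, i(e) = j} p_e(x) d(w_e x, w_e y) ≤ a·d(x, y)` on each `K_j`. -/
def IsContractive (M : MarkovSystem K N E) (a : ℝ) : Prop :=
  ∀ j : N, ∀ x ∈ M.Kset j, ∀ y ∈ M.Kset j,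
    (∑' e : {e : E // M.i e = j},
        ENNReal.ofReal (M.p e.val x * dist (M.w e.val x) (M.w e.val y)))
      ≤ ENNReal.ofReal (a * dist x y)

/-- `L(x) = ∑_j d(x, x_j)·1_{K_j}(x)`. -/
def Lfun (M : MarkovSystem K N E) (xp : N → K) : K → ℝ≥0∞ :=
  fun x => ∑' j : N, Set.indicator (M.Kset j) (fun y => ENNReal.ofReal (dist y (xp j))) x

/-- `b = sup_j sup_{x ∈ K_j} ∑_{e, i(e) = j} p_e(x)·d(w_e(x_{i(e)}), x_{t(e)})`. -/
def bConst (M : MarkovSystem K N E) (xp : N → K) : ℝ≥0∞ :=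
  ⨆ j : N, ⨆ x ∈ M.Kset j,
    ∑' e : {e : E // M.i e = j},
      ENNReal.ofReal (M.p e.val x * dist (M.w e.val (xp (M.i e.val))) (xp (M.t e.val)))

/-- `P^m_x` evaluated on a word: `p_{e_0}(x)·p_{e_1}(w_{e_0}x)·⋯`. -/
def wordProb (M : MarkovSystem K N E) : List (Option E) → K → ℝ
  | [], _ => 1
  | o :: rest, x => M.pext o x * M.wordProb rest (M.wext o x)

/-- `Λ = Φ(μ)`: `Λ` is a shift-invariant Borel probability measure with
`Λ(_m[e_m, …, e_n]) = ∫ P^m_x(_m[e_m, …, e_n]) dμ(x)` for all cylinders with `m ≤ 0`. -/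
def IsPhiOf (M : MarkovSystem K N E) (μ : Measure K) (Λ : Measure (CodeSpace E)) : Prop :=
  IsProbabilityMeasure Λ ∧ Measure.map (shiftMap E) Λ = Λ ∧
    ∀ m : ℤ, m ≤ 0 → ∀ es : List (Option E),
      Λ (cylSetL m es) = ∫⁻ x, ENNReal.ofReal (M.wordProb es x) ∂μ

/-- The (negative of the) energy function: `-u(σ) = -log p_{σ_1}(F(σ))` on `D`
(`+∞` if `p_{σ_1}(F(σ)) = 0`) and `+∞` off `D`, valued in `[0, ∞]`. -/
def negEnergy (M : MarkovSystem K N E) (j0 : N) (xp : N → K) (σ : CodeSpace E) : ℝ≥0∞ :=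
  if σ ∈ M.codeDomain j0 xp then
    (σ 1).elim ⊤ fun e =>
      if M.p e (M.code j0 xp σ) = 0 then ⊤
      else ENNReal.ofReal (-Real.log (M.p e (M.code j0 xp σ)))
  else ⊤

/-- The free energy `h_S(Λ) + ∫ u dΛ`, as an extended real number. -/
def freeEnergy (M : MarkovSystem K N E) (j0 : N) (xp : N → K)
    (Λ : Measure (CodeSpace E)) : EReal :=
  (entropyS Λ : EReal) - ((∫⁻ σ, M.negEnergy j0 xp σ ∂Λ : ℝ≥0∞) : EReal)

/-- `Λ₀ ∈ E(u)`: `Λ₀` is a thermodynamic equilibrium state for the energy function `u`. -/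
def IsEquilibriumForU (M : MarkovSystem K N E) (j0 : N) (xp : N → K)
    (Λ0 : Measure (CodeSpace E)) : Prop :=
  IsProbabilityMeasure Λ0 ∧ Measure.map (shiftMap E) Λ0 = Λ0 ∧ entropyS Λ0 ≠ ⊤ ∧
    M.freeEnergy j0 xp Λ0 =
      sSup {r : EReal | ∃ Λ : Measure (CodeSpace E),
        IsProbabilityMeasure Λ ∧ Measure.map (shiftMap E) Λ = Λ ∧ entropyS Λ ≠ ⊤ ∧
          r = M.freeEnergy j0 xp Λ}

end MarkovSystem

end

/-!
For a shift-invariant probability `Λ` with `Λ(D) = 1` write `g_e = E_Λ(1_{_1[e]} | 𝓕)`. Then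
`h_S(Λ) = ∑_e ∫ -g_e log g_e dΛ`, and since `F` agrees on `D` with an `𝓕`-measurable map,
`∫ -u dΛ = ∑_e ∫ -g_e log (p_e ∘ F) dΛ`. Adding `∑_e g_e = 1 = ∑_e p_e ∘ F` to both sides, the
pointwise Gibbs inequality `-a log a + a ≤ -a log b + b`, strict for `a ≠ b`, gives
`h_S(Λ) + ∫ u dΛ ≤ 0`, with equality for finite entropy exactly when `g_e = p_e ∘ F` a.e., i.e.
when `Λ ∈ E(M)`. If `Λ(D) < 1` then `∫ u dΛ = -∞`. So once a finite-entropy equilibrium state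
exists, the supremum defining `E(u)` is `0`, and `E(u)` is the set of states attaining it.
-/

section CondExpIndicator

variable {Ω : Type*} {m m0 : MeasurableSpace Ω} {μ : Measure Ω} {s : Set Ω}

lemma condExp_indicator_one_nonneg : 0 ≤ᵐ[μ] μ[s.indicator (fun _ => (1 : ℝ)) | m] :=
  condExp_nonneg (.of_forall fun _ => Set.indicator_nonneg (fun _ _ => zero_le_one) _)

lemma condExp_indicator_one_le_one [IsFiniteMeasure μ] (hm : m ≤ m0) (hs : MeasurableSet s) :
    μ[s.indicator (fun _ => (1 : ℝ)) | m] ≤ᵐ[μ] fun _ => 1 := by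
  have h := condExp_mono (m := m) ((integrable_const (μ := μ) (1 : ℝ)).indicator hs)
    (integrable_const (1 : ℝ))
    (.of_forall fun x => Set.indicator_le_self' (fun _ _ => zero_le_one) x)
  rwa [condExp_const hm] at h

lemma condExp_indicator_one_ae_eq_zero (hs : μ s = 0) :
    μ[s.indicator (fun _ => (1 : ℝ)) | m] =ᵐ[μ] 0 := by
  simpa using condExp_congr_ae (m := m) (indicator_meas_zero (f := fun _ => (1 : ℝ)) hs)

/-- On the sub-σ-algebra `m`, the conditional probability of `s` is a density of `μ.restrict s`
with respect to `μ`. -/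
lemma setLIntegral_eq_lintegral_mul_condExp_indicator [IsFiniteMeasure μ] (hm : m ≤ m0)
    (hs : MeasurableSet s) {f : Ω → ℝ≥0∞} (hf : Measurable[m] f) :
    ∫⁻ x in s, f x ∂μ
      = ∫⁻ x, f x * ENNReal.ofReal (μ[s.indicator (fun _ => (1 : ℝ)) | m] x) ∂μ := by
  set g := μ[s.indicator (fun _ => (1 : ℝ)) | m]
  have hg : Measurable fun x => ENNReal.ofReal (g x) :=
    ENNReal.measurable_ofReal.comp (stronglyMeasurable_condExp.mono hm).measurable
  have htrim : (μ.restrict s).trim hm = (μ.withDensity fun x => ENNReal.ofReal (g x)).trim hm := by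
    refine @Measure.ext _ m _ _ fun t ht => ?_
    rw [trim_measurableSet_eq hm ht, trim_measurableSet_eq hm ht, withDensity_apply _ (hm t ht),
      Measure.restrict_apply (hm t ht), ← ofReal_integral_eq_lintegral_ofReal
        integrable_condExp.integrableOn (ae_restrict_of_ae condExp_indicator_one_nonneg),
      setIntegral_condExp hm ((integrable_const (1 : ℝ)).indicator hs) ht,
      integral_indicator_const _ hs, smul_eq_mul, mul_one, measureReal_restrict_apply hs,
      ofReal_measureReal (measure_ne_top _ _), Set.inter_comm]
  rw [← lintegral_trim hm hf, htrim, lintegral_trim hm hf,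
    lintegral_withDensity_eq_lintegral_mul _ hg (hf.mono hm le_rfl)]
  simp only [Pi.mul_apply, mul_comm]

lemma lintegral_ofReal_condExp_indicator [IsFiniteMeasure μ] (hm : m ≤ m0) (hs : MeasurableSet s) :
    ∫⁻ x, ENNReal.ofReal (μ[s.indicator (fun _ => (1 : ℝ)) | m] x) ∂μ = μ s := by
  simpa using (setLIntegral_eq_lintegral_mul_condExp_indicator hm hs (f := 1) measurable_const).symm

end CondExpIndicator

lemma Real.negMulLog_add_lt {a b : ℝ} (ha : 0 ≤ a) (hb : 0 < b) (hab : a ≠ b) :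
    negMulLog a + a < a * -log b + b := by
  rcases ha.eq_or_lt with rfl | ha
  · simpa using hb
  have hlog : log (b / a) < b / a - 1 :=
    log_lt_sub_one_of_pos (by positivity) (by rwa [ne_eq, div_eq_one_iff_eq ha.ne', eq_comm])
  rw [log_div hb.ne' ha.ne'] at hlog
  have hmul := mul_lt_mul_of_pos_left hlog ha
  rw [mul_sub (a := a) (b / a), mul_div_cancel₀ _ ha.ne'] at hmul
  rw [negMulLog]
  linarith

/-- `-log b` as an extended nonnegative real, with the value `∞` at `b = 0` (where `Real.log`
has the junk value `0`). -/
noncomputable def negLogENNReal (b : ℝ) : ℝ≥0∞ := if b = 0 then ⊤ else ENNReal.ofReal (-Real.log b)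

lemma measurable_negLogENNReal : Measurable negLogENNReal :=
  Measurable.ite (measurableSet_singleton 0) measurable_const
    (ENNReal.measurable_ofReal.comp Real.measurable_log.neg)

lemma negLogENNReal_mul_ofReal_self {b : ℝ} (hb0 : 0 ≤ b) (hb1 : b ≤ 1) :
    negLogENNReal b * ENNReal.ofReal b = ENNReal.ofReal (Real.negMulLog b) := by
  rcases hb0.eq_or_lt with rfl | hb
  · simp
  rw [negLogENNReal, if_neg hb.ne', ← ENNReal.ofReal_mul (neg_nonneg.2 (Real.log_nonpos hb0 hb1)),
    Real.negMulLog, neg_mul_comm, mul_comm]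

lemma negLogENNReal_mul_add_of_pos {a b : ℝ} (ha : 0 ≤ a) (hb0 : 0 < b) (hb1 : b ≤ 1) :
    negLogENNReal b * ENNReal.ofReal a + ENNReal.ofReal b
      = ENNReal.ofReal (a * -Real.log b + b) := by
  have hlog : 0 ≤ -Real.log b := neg_nonneg.2 (Real.log_nonpos hb0.le hb1)
  rw [negLogENNReal, if_neg hb0.ne', ← ENNReal.ofReal_mul hlog,
    ← ENNReal.ofReal_add (mul_nonneg hlog ha) hb0.le, mul_comm]

lemma ofReal_negMulLog_add_lt {a b : ℝ} (ha0 : 0 ≤ a) (ha1 : a ≤ 1) (hb0 : 0 ≤ b) (hb1 : b ≤ 1)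
    (hab : a ≠ b) :
    ENNReal.ofReal (Real.negMulLog a) + ENNReal.ofReal a
      < negLogENNReal b * ENNReal.ofReal a + ENNReal.ofReal b := by
  rw [← ENNReal.ofReal_add (Real.negMulLog_nonneg ha0 ha1) ha0]
  rcases hb0.eq_or_lt with rfl | hb
  · have ha : 0 < a := lt_of_le_of_ne ha0 hab.symm
    simp [negLogENNReal, ENNReal.top_mul (ENNReal.ofReal_pos.2 ha).ne']
  have hlog : 0 ≤ -Real.log b := neg_nonneg.2 (Real.log_nonpos hb0 hb1)
  rw [negLogENNReal_mul_add_of_pos ha0 hb hb1]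
  exact (ENNReal.ofReal_lt_ofReal_iff (by positivity)).2 (Real.negMulLog_add_lt ha0 hb hab)

lemma ofReal_negMulLog_add_le {a b : ℝ} (ha0 : 0 ≤ a) (ha1 : a ≤ 1) (hb0 : 0 ≤ b) (hb1 : b ≤ 1) :
    ENNReal.ofReal (Real.negMulLog a) + ENNReal.ofReal a
      ≤ negLogENNReal b * ENNReal.ofReal a + ENNReal.ofReal b := by
  rcases eq_or_ne a b with rfl | hab
  · rw [negLogENNReal_mul_ofReal_self ha0 ha1]
  · exact (ofReal_negMulLog_add_lt ha0 ha1 hb0 hb1 hab).le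

instance optionDiscreteMeasurableSpace (E : Type*) : DiscreteMeasurableSpace (Option E) :=
  ⟨fun _ => MeasurableSpace.measurableSet_top⟩

section PastAlgebra

variable {E : Type*}

lemma measurableSet_symbol_eq (k : ℤ) (eo : Option E) :
    MeasurableSet {σ : CodeSpace E | σ k = eo} := by
  measurability

lemma measurableSet_cylSetL (m : ℤ) (es : List (Option E)) : MeasurableSet (cylSetL m es) := by
  unfold cylSetL
  measurability

lemma pastAlgebra_le : pastAlgebra E ≤ MeasurableSpace.pi :=
  MeasurableSpace.generateFrom_le fun _ ⟨es, _, hA⟩ => hA ▸ measurableSet_cylSetL _ es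

def pastWord (n : ℕ) (σ : CodeSpace E) : Fin (n + 1) → Option E := fun j => σ (j - n)

lemma pastWord_preimage_singleton (n : ℕ) (v : Fin (n + 1) → Option E) :
    pastWord n ⁻¹' {v} = cylSetL (-n) (List.ofFn v) := by
  ext σ
  simp only [Set.mem_preimage, Set.mem_singleton_iff, cylSetL, Set.mem_ofPred_eq, List.length_ofFn,
    List.get_ofFn, Fin.cast_mk, funext_iff, pastWord, neg_add_eq_sub]
  exact ⟨fun h k hk => h ⟨k, hk⟩, fun h j => h j j.isLt⟩

variable [Countable E]

lemma measurable_pastWord (n : ℕ) : Measurable[pastAlgebra E] (pastWord (E := E) n) :=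
  @measurable_to_countable' _ _ _ _ (pastAlgebra E) _ fun v => by
    rw [pastWord_preimage_singleton]
    refine MeasurableSpace.measurableSet_generateFrom ⟨List.ofFn v, by simp, ?_⟩
    simp

/-- Functions of finitely many past coordinates are `𝓕`-measurable without any separability of the
target, because these coordinates take only countably many values. -/
lemma DependsOn.measurable_pastAlgebra {γ : Type*} [MeasurableSpace γ] {G : CodeSpace E → γ}
    {n : ℕ} (hG : DependsOn G (Set.Icc (-(n : ℤ)) 0)) : Measurable[pastAlgebra E] G := by
  let extend : (Fin (n + 1) → Option E) → CodeSpace E := fun v k =>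
    if h : -(n : ℤ) ≤ k ∧ k ≤ 0 then v ⟨(k + n).toNat, by omega⟩ else none
  have hfactor : G = (G ∘ extend) ∘ pastWord n := by
    funext σ
    refine (hG fun k hk => ?_).symm
    have hk' := Set.mem_Icc.1 hk
    simp only [extend, pastWord, dif_pos hk']
    congr 1
    omega
  rw [hfactor]
  exact (measurable_of_countable _).comp (measurable_pastWord n)

end PastAlgebra

section CondProbNext

variable {E : Type*} (Λ : Measure (CodeSpace E))

/-- `E_Λ(1_{_1[eo]} | 𝓕)`. -/
noncomputable def condProbNext (eo : Option E) : CodeSpace E → ℝ :=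
  Λ[{σ : CodeSpace E | σ 1 = eo}.indicator (fun _ => (1 : ℝ)) | pastAlgebra E]

lemma measurable_condProbNext (eo : Option E) : Measurable (condProbNext Λ eo) :=
  (stronglyMeasurable_condExp.mono pastAlgebra_le).measurable

lemma entropyS_eq_tsum [IsFiniteMeasure Λ] (hnone : Λ {σ : CodeSpace E | σ 1 = none} = 0) :
    entropyS Λ
      = ∑' e : E, ∫⁻ σ, ENNReal.ofReal (Real.negMulLog (condProbNext Λ (some e) σ)) ∂Λ := by
  have hzero : ∫⁻ σ, ENNReal.ofReal (Real.negMulLog (condProbNext Λ none σ)) ∂Λ = 0 := by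
    rw [lintegral_congr_ae ((condExp_indicator_one_ae_eq_zero hnone).mono fun σ hσ => by
      rw [condProbNext, hσ])]
    simp
  refine ((Option.some_injective E).tsum_eq fun eo heo => ?_).symm
  cases eo with
  | none => exact absurd hzero heo
  | some e => exact ⟨e, rfl⟩

end CondProbNext

namespace MarkovSystem

section Coding

variable {K : Type*} [MetricSpace K] [MeasurableSpace K] {N E : Type*}
  (M : MarkovSystem K N E) (j0 : N) (xp : N → K)

lemma tsum_ofReal_p_eq_one (x : K) : ∑' e : E, ENNReal.ofReal (M.p e x) = 1 := by
  obtain ⟨j, hj⟩ := Set.mem_iUnion.1 (M.Kset_cover.symm ▸ Set.mem_univ x : x ∈ ⋃ j, M.Kset j)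
  have hsupport : Function.support (fun e => ENNReal.ofReal (M.p e x)) ⊆ {e | M.i e = j} :=
    fun e he => by_contra fun hij => he <| by
      simp [M.p_zero_outside e x fun hx => (M.Kset_disjoint hij).le_bot ⟨hx, hj⟩]
  have hsummable : Summable fun e : {e : E // M.i e = j} => M.p e.val x := by
    by_contra h
    simpa [tsum_eq_zero_of_not_summable h] using M.p_tsum_one j x hj
  rw [← tsum_subtype_eq_of_support_subset hsupport]
  change ∑' e : {e : E // M.i e = j}, ENNReal.ofReal (M.p e.val x) = 1
  rw [← ENNReal.ofReal_tsum_of_nonneg (fun e => M.p_nonneg _ x) hsummable, M.p_tsum_one j x hj,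
    ENNReal.ofReal_one]

lemma dependsOn_iterW (m : ℕ) (y : K) :
    DependsOn (fun σ => M.iterW σ m y) (Set.Icc (-(m : ℤ)) 0) := by
  intro σ τ h
  induction m generalizing y with
  | zero => simp only [iterW, h 0 (by simp)]
  | succ n ih =>
    simp only [iterW, h (-(n + 1 : ℤ)) (by simp)]
    exact ih _ fun k hk => h k (by simp at hk ⊢; omega)

lemma dependsOn_orbit (m : ℕ) :
    DependsOn (fun σ => M.orbit j0 xp σ m) (Set.Icc (-(m : ℤ)) 0) := by
  intro σ τ h
  simp only [orbit, h (-(m : ℤ)) (by simp), M.dependsOn_iterW m _ h]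

def convergenceSet : Set (CodeSpace E) :=
  {σ | ∃ l : K, Tendsto (fun n : ℕ => M.orbit j0 xp σ n) atTop (𝓝 l)}

/-- The coding map without the path condition in `D`, which involves future coordinates: it is
`𝓕`-measurable and agrees with `F` on `D`. -/
noncomputable def codeLim (σ : CodeSpace E) : K :=
  if h : σ ∈ M.convergenceSet j0 xp then h.choose else xp j0

lemma tendsto_codeLim {σ : CodeSpace E} (h : σ ∈ M.convergenceSet j0 xp) :
    Tendsto (fun n : ℕ => M.orbit j0 xp σ n) atTop (𝓝 (M.codeLim j0 xp σ)) := by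
  rw [codeLim, dif_pos h]
  exact h.choose_spec

lemma code_eq_codeLim {σ : CodeSpace E} (h : σ ∈ M.codeDomain j0 xp) :
    M.code j0 xp σ = M.codeLim j0 xp σ := by
  rw [code, dif_pos h, codeLim, dif_pos (show σ ∈ M.convergenceSet j0 xp from h.2)]

lemma exists_symbol_eq_some {σ : CodeSpace E} (hσ : σ ∈ M.codeDomain j0 xp) (k : ℤ) :
    ∃ e : E, σ k = some e :=
  let ⟨e, _, he, _⟩ := hσ.1 k
  ⟨e, he⟩

lemma negEnergy_eq_negLogENNReal {σ : CodeSpace E} (hσ : σ ∈ M.codeDomain j0 xp) {e : E}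
    (he : σ 1 = some e) :
    M.negEnergy j0 xp σ = negLogENNReal (M.p e (M.codeLim j0 xp σ)) := by
  rw [negEnergy, if_pos hσ, he, M.code_eq_codeLim j0 xp hσ]
  rfl

variable [Countable E]

lemma measurableSet_convergenceSet [CompleteSpace K] :
    MeasurableSet[pastAlgebra E] (M.convergenceSet j0 xp) := by
  have hcauchy : M.convergenceSet j0 xp = ⋂ i : ℕ, ⋃ n₀ : ℕ, ⋂ n ≥ n₀,
      {σ | dist (M.orbit j0 xp σ n) (M.orbit j0 xp σ n₀) < 1 / (i + 1)} := by
    ext σ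
    rw [convergenceSet, Set.mem_ofPred_eq, ← cauchy_map_iff_exists_tendsto, ← CauchySeq,
      Metric.uniformity_basis_dist_inv_nat_succ.cauchySeq_iff']
    simp
  rw [hcauchy]
  refine .iInter fun i => .iUnion fun n₀ => .iInter fun n => .iInter fun _ => ?_
  have hdep : DependsOn (fun σ => dist (M.orbit j0 xp σ n) (M.orbit j0 xp σ n₀))
      (Set.Icc (-(max n n₀ : ℕ) : ℤ) 0) := fun σ τ h => by
    dsimp only
    congr 1 <;> apply M.dependsOn_orbit <;> intro k hk <;>
      exact h k ⟨by simp at hk ⊢; omega, hk.2⟩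
  exact hdep.measurable_pastAlgebra measurableSet_Iio

lemma measurableSet_codeDomain [CompleteSpace K] : MeasurableSet (M.codeDomain j0 xp) := by
  refine MeasurableSet.inter ?_ (pastAlgebra_le _ (M.measurableSet_convergenceSet j0 xp))
  unfold pathSpace
  measurability

lemma measurable_codeLim [CompleteSpace K] [BorelSpace K] :
    Measurable[pastAlgebra E] (M.codeLim j0 xp) := by
  refine @measurable_of_tendsto_metrizable' _ _ (pastAlgebra E) _ _ _ _ _
    (fun n => (M.convergenceSet j0 xp).piecewise (fun σ => M.orbit j0 xp σ n) fun _ => xp j0)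
    _ atTop _ _ (fun n => (M.dependsOn_orbit j0 xp n).measurable_pastAlgebra.piecewise
      (M.measurableSet_convergenceSet j0 xp) measurable_const) (tendsto_pi_nhds.2 fun σ => ?_)
  by_cases h : σ ∈ M.convergenceSet j0 xp
  · simpa only [Set.piecewise_eq_of_mem _ _ _ h] using M.tendsto_codeLim j0 xp h
  · simpa only [Set.piecewise_eq_of_notMem _ _ _ h, codeLim, dif_neg h] using tendsto_const_nhds

lemma measurable_negLogENNReal_p_codeLim [CompleteSpace K] [BorelSpace K] (e : E) :
    Measurable[pastAlgebra E] fun σ => negLogENNReal (M.p e (M.codeLim j0 xp σ)) :=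
  measurable_negLogENNReal.comp ((M.p_measurable e).comp (M.measurable_codeLim j0 xp))

end Coding

section Gibbs

variable {K : Type*} [MetricSpace K] [MeasurableSpace K] {N E : Type*} [Countable E]
  (M : MarkovSystem K N E) (j0 : N) (xp : N → K) (Λ : Measure (CodeSpace E))

/-- `gibbsLeft` and `gibbsRight` are the two sides of the Gibbs inequality at `a = g_e`,
`b = p_e ∘ F`, summed over `e`. -/
noncomputable def gibbsLeft (σ : CodeSpace E) : ℝ≥0∞ :=
  ∑' e : E, (ENNReal.ofReal (Real.negMulLog (condProbNext Λ (some e) σ))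
    + ENNReal.ofReal (condProbNext Λ (some e) σ))

noncomputable def gibbsRight (σ : CodeSpace E) : ℝ≥0∞ :=
  ∑' e : E, (negLogENNReal (M.p e (M.codeLim j0 xp σ)) * ENNReal.ofReal (condProbNext Λ (some e) σ)
    + ENNReal.ofReal (M.p e (M.codeLim j0 xp σ)))

lemma measurable_gibbsLeft : Measurable (gibbsLeft Λ) :=
  .tsum fun e => (ENNReal.measurable_ofReal.comp
    (Real.continuous_negMulLog.measurable.comp (measurable_condProbNext Λ (some e)))).add
    (ENNReal.measurable_ofReal.comp (measurable_condProbNext Λ (some e)))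

lemma gibbsLeft_le_gibbsRight [IsFiniteMeasure Λ] : ∀ᵐ σ ∂Λ, ∀ e : E,
    ENNReal.ofReal (Real.negMulLog (condProbNext Λ (some e) σ))
        + ENNReal.ofReal (condProbNext Λ (some e) σ)
      ≤ negLogENNReal (M.p e (M.codeLim j0 xp σ)) * ENNReal.ofReal (condProbNext Λ (some e) σ)
        + ENNReal.ofReal (M.p e (M.codeLim j0 xp σ)) := by
  refine ae_all_iff.2 fun e => ?_
  filter_upwards [condExp_indicator_one_nonneg (μ := Λ) (m := pastAlgebra E)
      (s := {σ : CodeSpace E | σ 1 = some e}),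
    condExp_indicator_one_le_one pastAlgebra_le (measurableSet_symbol_eq 1 (some e))] with σ h0 h1
  exact ofReal_negMulLog_add_le h0 h1 (M.p_nonneg e _) (M.p_le_one e _)

lemma tsum_measure_symbol_eq_one [IsProbabilityMeasure Λ] (hD : Λ (M.codeDomain j0 xp) = 1) :
    ∑' e : E, Λ {σ : CodeSpace E | σ 1 = some e} = 1 := by
  rw [← measure_iUnion (fun e e' hne => Set.disjoint_left.2 fun σ h h' => hne (by simp_all))
    fun e => measurableSet_symbol_eq 1 (some e)]
  refine le_antisymm prob_le_one (hD ▸ measure_mono fun σ hσ => ?_)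
  obtain ⟨e, he⟩ := M.exists_symbol_eq_some j0 xp hσ 1
  exact Set.mem_iUnion.2 ⟨e, he⟩

variable [CompleteSpace K]

section

variable [IsProbabilityMeasure Λ]

lemma ae_mem_codeDomain (hD : Λ (M.codeDomain j0 xp) = 1) : ∀ᵐ σ ∂Λ, σ ∈ M.codeDomain j0 xp :=
  (mem_ae_iff_prob_eq_one (M.measurableSet_codeDomain j0 xp)).2 hD

lemma measure_symbol_none_eq_zero (hD : Λ (M.codeDomain j0 xp) = 1) :
    Λ {σ : CodeSpace E | σ 1 = none} = 0 :=
  measure_mono_null (t := (M.codeDomain j0 xp)ᶜ) (fun σ (hσ : σ 1 = none) hσD => by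
      obtain ⟨e, he⟩ := M.exists_symbol_eq_some j0 xp hσD 1
      simp [hσ] at he)
    ((prob_compl_eq_zero_iff (M.measurableSet_codeDomain j0 xp)).2 hD)

lemma lintegral_negEnergy_eq_top (hD : Λ (M.codeDomain j0 xp) ≠ 1) :
    ∫⁻ σ, M.negEnergy j0 xp σ ∂Λ = ⊤ := by
  have hmeas := (M.measurableSet_codeDomain j0 xp).compl
  refine top_le_iff.1 (le_trans ?_ (setLIntegral_le_lintegral (M.codeDomain j0 xp)ᶜ _))
  rw [setLIntegral_congr_fun hmeas fun σ hσ => by rw [negEnergy, if_neg hσ], setLIntegral_const,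
    ENNReal.top_mul ((prob_compl_eq_zero_iff (M.measurableSet_codeDomain j0 xp)).not.2 hD)]

lemma lintegral_gibbsLeft (hD : Λ (M.codeDomain j0 xp) = 1) :
    ∫⁻ σ, gibbsLeft Λ σ ∂Λ = entropyS Λ + 1 := by
  have hcondProb (e : E) : Measurable fun σ => ENNReal.ofReal (condProbNext Λ (some e) σ) :=
    ENNReal.measurable_ofReal.comp (measurable_condProbNext Λ (some e))
  have hnegMulLog (e : E) :
      Measurable fun σ => ENNReal.ofReal (Real.negMulLog (condProbNext Λ (some e) σ)) :=
    ENNReal.measurable_ofReal.comp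
      (Real.continuous_negMulLog.measurable.comp (measurable_condProbNext Λ (some e)))
  simp only [gibbsLeft, ENNReal.tsum_add]
  rw [lintegral_add_right _ (.tsum hcondProb), lintegral_tsum fun e => (hcondProb e).aemeasurable,
    lintegral_tsum fun e => (hnegMulLog e).aemeasurable, entropyS_eq_tsum Λ
      (M.measure_symbol_none_eq_zero j0 xp Λ hD), ← M.tsum_measure_symbol_eq_one j0 xp Λ hD]
  congr 1
  exact tsum_congr fun e => lintegral_ofReal_condExp_indicator pastAlgebra_le
    (measurableSet_symbol_eq 1 (some e))

end

variable [BorelSpace K]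

lemma measurable_gibbsRight : Measurable (M.gibbsRight j0 xp Λ) := by
  have hcodeLim := (M.measurable_codeLim j0 xp).mono pastAlgebra_le le_rfl
  exact .tsum fun e => (((M.measurable_negLogENNReal_p_codeLim j0 xp e).mono pastAlgebra_le
    le_rfl).mul (ENNReal.measurable_ofReal.comp (measurable_condProbNext Λ (some e)))).add
    (ENNReal.measurable_ofReal.comp ((M.p_measurable e).comp hcodeLim))

section

variable [IsProbabilityMeasure Λ]

lemma lintegral_negEnergy_eq_tsum (hD : Λ (M.codeDomain j0 xp) = 1) :
    ∫⁻ σ, M.negEnergy j0 xp σ ∂Λ = ∑' e : E, ∫⁻ σ, negLogENNReal (M.p e (M.codeLim j0 xp σ))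
      * ENNReal.ofReal (condProbNext Λ (some e) σ) ∂Λ := by
  have hsplit : M.negEnergy j0 xp =ᵐ[Λ] fun σ => ∑' e : E,
      {σ : CodeSpace E | σ 1 = some e}.indicator
        (fun σ => negLogENNReal (M.p e (M.codeLim j0 xp σ))) σ := by
    filter_upwards [M.ae_mem_codeDomain j0 xp Λ hD] with σ hσ
    obtain ⟨e, he⟩ := M.exists_symbol_eq_some j0 xp hσ 1
    rw [tsum_eq_single e fun e' he' => Set.indicator_of_notMem (by simp [he, Ne.symm he']) _,
      Set.indicator_of_mem (show σ ∈ {σ : CodeSpace E | σ 1 = some e} from he),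
      M.negEnergy_eq_negLogENNReal j0 xp hσ he]
  rw [lintegral_congr_ae hsplit, lintegral_tsum fun e =>
    (((M.measurable_negLogENNReal_p_codeLim j0 xp e).mono pastAlgebra_le le_rfl).indicator
      (measurableSet_symbol_eq 1 (some e))).aemeasurable]
  refine tsum_congr fun e => ?_
  rw [lintegral_indicator (measurableSet_symbol_eq 1 (some e))]
  exact setLIntegral_eq_lintegral_mul_condExp_indicator pastAlgebra_le
    (measurableSet_symbol_eq 1 (some e)) (M.measurable_negLogENNReal_p_codeLim j0 xp e)

lemma lintegral_gibbsRight (hD : Λ (M.codeDomain j0 xp) = 1) :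
    ∫⁻ σ, M.gibbsRight j0 xp Λ σ ∂Λ = ∫⁻ σ, M.negEnergy j0 xp σ ∂Λ + 1 := by
  have hterm (e : E) : Measurable fun σ =>
      negLogENNReal (M.p e (M.codeLim j0 xp σ)) * ENNReal.ofReal (condProbNext Λ (some e) σ) :=
    ((M.measurable_negLogENNReal_p_codeLim j0 xp e).mono pastAlgebra_le le_rfl).mul
      (ENNReal.measurable_ofReal.comp (measurable_condProbNext Λ (some e)))
  simp only [gibbsRight, ENNReal.tsum_add, M.tsum_ofReal_p_eq_one]
  rw [lintegral_add_right _ measurable_const, lintegral_tsum fun e => (hterm e).aemeasurable,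
    M.lintegral_negEnergy_eq_tsum j0 xp Λ hD, lintegral_one, measure_univ]

lemma entropyS_le_lintegral_negEnergy : entropyS Λ ≤ ∫⁻ σ, M.negEnergy j0 xp σ ∂Λ := by
  by_cases hD : Λ (M.codeDomain j0 xp) = 1
  · rw [← ENNReal.add_le_add_iff_right ENNReal.one_ne_top, ← M.lintegral_gibbsLeft j0 xp Λ hD,
      ← M.lintegral_gibbsRight j0 xp Λ hD]
    exact lintegral_mono_ae ((M.gibbsLeft_le_gibbsRight j0 xp Λ).mono fun σ h =>
      ENNReal.tsum_le_tsum h)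
  · rw [M.lintegral_negEnergy_eq_top j0 xp Λ hD]
    exact le_top

/-- Equality in the integrated Gibbs inequality forces equality in each of its summands almost
everywhere, and the pointwise inequality is strict off `g_e = p_e ∘ F`. -/
lemma condProbNext_ae_eq_of_lintegral_negEnergy_le (hfin : entropyS Λ ≠ ⊤)
    (hle : ∫⁻ σ, M.negEnergy j0 xp σ ∂Λ ≤ entropyS Λ) (e : E) :
    condProbNext Λ (some e) =ᵐ[Λ] fun σ => M.p e (M.code j0 xp σ) := by
  have hD : Λ (M.codeDomain j0 xp) = 1 := by
    by_contra hD
    exact hfin (top_le_iff.1 (M.lintegral_negEnergy_eq_top j0 xp Λ hD ▸ hle))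
  have hleftFin : ∫⁻ σ, gibbsLeft Λ σ ∂Λ ≠ ⊤ := by
    rw [M.lintegral_gibbsLeft j0 xp Λ hD]
    exact ENNReal.add_ne_top.2 ⟨hfin, ENNReal.one_ne_top⟩
  have hterms := M.gibbsLeft_le_gibbsRight j0 xp Λ
  have heq : gibbsLeft Λ =ᵐ[Λ] M.gibbsRight j0 xp Λ := by
    refine ae_eq_of_ae_le_of_lintegral_le (hterms.mono fun σ h => ENNReal.tsum_le_tsum h) hleftFin
      (M.measurable_gibbsRight j0 xp Λ).aemeasurable ?_
    rw [M.lintegral_gibbsLeft j0 xp Λ hD, M.lintegral_gibbsRight j0 xp Λ hD]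
    gcongr
  filter_upwards [hterms, heq, ae_lt_top (measurable_gibbsLeft Λ) hleftFin,
    M.ae_mem_codeDomain j0 xp Λ hD,
    condExp_indicator_one_nonneg (μ := Λ) (m := pastAlgebra E)
      (s := {σ : CodeSpace E | σ 1 = some e}),
    condExp_indicator_one_le_one pastAlgebra_le (measurableSet_symbol_eq 1 (some e))]
    with σ hσ hσeq hσfin hσD h0 h1
  rw [M.code_eq_codeLim j0 xp hσD]
  by_contra hne
  exact (ENNReal.tsum_lt_tsum hσfin.ne hσ
    (ofReal_negMulLog_add_lt h0 h1 (M.p_nonneg e _) (M.p_le_one e _) hne)).ne hσeq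

lemma freeEnergy_nonpos : M.freeEnergy j0 xp Λ ≤ 0 :=
  EReal.sub_nonpos.2 <| EReal.coe_ennreal_le_coe_ennreal_iff.2 <|
    M.entropyS_le_lintegral_negEnergy j0 xp Λ

lemma isEquilibrium_of_freeEnergy_eq_zero (hshift : Measure.map (shiftMap E) Λ = Λ)
    (hfin : entropyS Λ ≠ ⊤) (hzero : M.freeEnergy j0 xp Λ = 0) : M.IsEquilibrium j0 xp Λ := by
  have hle : ∫⁻ σ, M.negEnergy j0 xp σ ∂Λ ≤ entropyS Λ :=
    EReal.coe_ennreal_le_coe_ennreal_iff.1 <| (EReal.sub_nonneg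
      (.inl (EReal.coe_ennreal_eq_top_iff.not.2 hfin)) (.inl (EReal.coe_ennreal_ne_bot _))).1
      hzero.ge
  have hD : Λ (M.codeDomain j0 xp) = 1 := by
    by_contra hD
    exact hfin (top_le_iff.1 (M.lintegral_negEnergy_eq_top j0 xp Λ hD ▸ hle))
  exact ⟨‹_›, hshift, hD, M.condProbNext_ae_eq_of_lintegral_negEnergy_le j0 xp Λ hfin hle⟩

end

lemma entropyS_eq_lintegral_negEnergy (hE : M.IsEquilibrium j0 xp Λ) :
    entropyS Λ = ∫⁻ σ, M.negEnergy j0 xp σ ∂Λ := by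
  obtain ⟨hprob, -, hD, hcond⟩ := hE
  rw [entropyS_eq_tsum Λ (M.measure_symbol_none_eq_zero j0 xp Λ hD),
    M.lintegral_negEnergy_eq_tsum j0 xp Λ hD]
  refine tsum_congr fun e => lintegral_congr_ae ?_
  filter_upwards [hcond e, M.ae_mem_codeDomain j0 xp Λ hD] with σ hσ hσD
  rw [condProbNext, hσ, ← M.code_eq_codeLim j0 xp hσD,
    negLogENNReal_mul_ofReal_self (M.p_nonneg e _) (M.p_le_one e _)]

lemma freeEnergy_eq_zero_of_isEquilibrium (hE : M.IsEquilibrium j0 xp Λ) (hfin : entropyS Λ ≠ ⊤) :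
    M.freeEnergy j0 xp Λ = 0 := by
  rw [freeEnergy, ← M.entropyS_eq_lintegral_negEnergy j0 xp Λ hE]
  exact EReal.sub_self (EReal.coe_ennreal_eq_top_iff.not.2 hfin) (EReal.coe_ennreal_ne_bot _)

end Gibbs

end MarkovSystem

variable {K : Type*} [MetricSpace K] [CompleteSpace K] [MeasurableSpace K] [BorelSpace K]
  {N E : Type*} [Countable N] [Countable E]

theorem equilibrium_finite_entropy_eq_equilibriumForU_general
    (M : MarkovSystem K N E) (j0 : N) (xp : N → K)
    (hne : ∃ Λ : Measure (CodeSpace E), M.IsEquilibrium j0 xp Λ ∧ entropyS Λ ≠ ⊤) :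
    {Λ : Measure (CodeSpace E) | M.IsEquilibrium j0 xp Λ ∧ entropyS Λ ≠ ⊤} =
      {Λ : Measure (CodeSpace E) | M.IsEquilibriumForU j0 xp Λ} := by
  obtain ⟨Λ₀, hE₀, hfin₀⟩ := hne
  have hsup : sSup {r : EReal | ∃ Λ : Measure (CodeSpace E),
      IsProbabilityMeasure Λ ∧ Measure.map (shiftMap E) Λ = Λ ∧ entropyS Λ ≠ ⊤ ∧
        r = M.freeEnergy j0 xp Λ} = 0 := by
    refine le_antisymm (sSup_le ?_) (le_sSup ⟨Λ₀, hE₀.1, hE₀.2.1, hfin₀,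
      (M.freeEnergy_eq_zero_of_isEquilibrium j0 xp Λ₀ hE₀ hfin₀).symm⟩)
    rintro _ ⟨Λ, hΛ, -, -, rfl⟩
    exact M.freeEnergy_nonpos j0 xp Λ
  ext Λ
  simp only [Set.mem_ofPred_eq, MarkovSystem.IsEquilibriumForU, hsup]
  exact ⟨fun ⟨hE, hfin⟩ =>
      ⟨hE.1, hE.2.1, hfin, M.freeEnergy_eq_zero_of_isEquilibrium j0 xp Λ hE hfin⟩,
    fun ⟨_, hshift, hfin, hzero⟩ =>
      ⟨M.isEquilibrium_of_freeEnergy_eq_zero j0 xp Λ hshift hfin hzero, hfin⟩⟩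

/-- If `{M ∈ E(M) : h_S(M) < ∞}` is nonempty, then it equals `E(u)`. -/
theorem equilibrium_finite_entropy_eq_equilibriumForU
    (M : MarkovSystem K N E) (j0 : N) (xp : N → K) (hxp : ∀ j, xp j ∈ M.Kset j)
    (hne : ∃ Λ : Measure (CodeSpace E), M.IsEquilibrium j0 xp Λ ∧ entropyS Λ ≠ ⊤) :
    {Λ : Measure (CodeSpace E) | M.IsEquilibrium j0 xp Λ ∧ entropyS Λ ≠ ⊤} =
      {Λ : Measure (CodeSpace E) | M.IsEquilibriumForU j0 xp Λ} :=
  equilibrium_finite_entropy_eq_equilibriumForU_general M j0 xp hne
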